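/- Let β ∈ (1,2] and let J = [p,q] be a Lyndon interval generated by a Lyndon word S of length m ≥ 2, meaning Σ_i a_i p^{-i} = 1 where (a_i) = L(S)^∞ and Σ_i b_i q^{-i} = 1 where (b_i) = L(S)^+ S^∞. Then the length of J satisfies q − p ≤ (q/(q−1)) · q^{−m}. -/

import Mathlib

/-- The cyclic rotation of a binary word `c` by `i`: `c_{i+1}…c_m c_1…c_i`. -/
def rot (c : List Bool) (i : ℕ) : List Bool := c.drop i ++ c.take i

/-- The lexicographically largest cyclic rotation `L(s)` of `s`. -/
def maxRot (s : List Bool) : List Bool :=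
  (List.range s.length).foldl (fun acc i => max acc (rot s i)) s

/-- The lexicographically smallest cyclic rotation `S(s)` of `s`. -/
def minRot (s : List Bool) : List Bool :=
  (List.range s.length).foldl (fun acc i => min acc (rot s i)) s

/-- A binary word is Lyndon if every proper suffix is strictly lexicographically
greater than the prefix of the same length. -/
def IsLyndon (s : List Bool) : Prop :=
  ∀ i, 0 < i → i < s.length → s.take (s.length - i) < s.drop i

/-- Left shift on sequences. -/
def shift (x : ℕ → Bool) (n : ℕ) : ℕ → Bool := fun i => x (n + i)

/-- Strict lexicographic order on `{0,1}^ℕ`. -/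
def seqLt (x y : ℕ → Bool) : Prop := ∃ n, (∀ i, i < n → x i = y i) ∧ x n < y n

/-- Lexicographic order on `{0,1}^ℕ`. -/
def seqLe (x y : ℕ → Bool) : Prop := seqLt x y ∨ x = y

/-- The periodic sequence `w^∞` with period block `w`. -/
def perSeq (w : List Bool) : ℕ → Bool := fun n => w.getD (n % w.length) false

/-- The sequence starting with the word `w` followed by the sequence `x`. -/
def app (w : List Bool) (x : ℕ → Bool) : ℕ → Bool := fun n => w.getD n (x (n - w.length))

/-- The value `((c_i))_β = Σ_{i≥1} c_i β^{-i}` of a binary sequence in base `β`. -/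
noncomputable def val (β : ℝ) (x : ℕ → Bool) : ℝ :=
  ∑' n, (cond (x n) 1 0 : ℝ) / β ^ (n + 1)

/-! ### Auxiliary combinatorial lemmas -/

lemma rot_length (s : List Bool) (i : ℕ) : (rot s i).length = s.length := by
  simp [rot]; omega

lemma rot_zero (s : List Bool) : rot s 0 = s := by simp [rot]

/-- `t` is a cyclic rotation of `s`. -/
def IsRot (s t : List Bool) : Prop := ∃ x y : List Bool, s = x ++ y ∧ t = y ++ x

lemma isRot_rot (s : List Bool) (i : ℕ) : IsRot s (rot s i) :=
  ⟨s.take i, s.drop i, (s.take_append_drop i).symm, rfl⟩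

lemma isRot_trans {s t u : List Bool} (h1 : IsRot s t) (h2 : IsRot t u) : IsRot s u := by
  obtain ⟨x, y, rfl, rfl⟩ := h1
  obtain ⟨a, b, hab, rfl⟩ := h2
  rcases List.append_eq_append_iff.mp hab with h | h
  · obtain ⟨w, hw1, hw2⟩ := h
    exact ⟨w, b ++ y, by rw [hw2]; simp, by rw [hw1]; simp⟩
  · obtain ⟨w, hw1, hw2⟩ := h
    exact ⟨x ++ a, w, by rw [hw1]; simp, by rw [hw2]; simp⟩

lemma isRot_mem_iff {s t : List Bool} (h : IsRot s t) (b : Bool) : b ∈ t ↔ b ∈ s := by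
  obtain ⟨x, y, rfl, rfl⟩ := h
  simp only [List.mem_append]; tauto

lemma isRot_length {s t : List Bool} (h : IsRot s t) : t.length = s.length := by
  obtain ⟨x, y, rfl, rfl⟩ := h
  simp only [List.length_append]; omega

lemma maxRot_eq_foldl (s : List Bool) :
    maxRot s = ((List.range s.length).map (rot s)).foldl max s := by
  rw [List.foldl_map]; rfl

lemma le_foldl_max (l : List (List Bool)) (a : List Bool) : a ≤ l.foldl max a := by
  induction l generalizing a with
  | nil => exact le_refl a
  | cons b t ih => exact le_trans (le_max_left a b) (ih _)

lemma mem_le_foldl_max (l : List (List Bool)) (a x : List Bool) (hx : x ∈ l) :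
    x ≤ l.foldl max a := by
  induction l generalizing a with
  | nil => simp at hx
  | cons b t ih =>
    rcases List.mem_cons.mp hx with rfl | h
    · exact le_trans (le_max_right a x) (le_foldl_max t _)
    · exact ih _ h

lemma foldl_max_choice (l : List (List Bool)) (a : List Bool) :
    l.foldl max a = a ∨ l.foldl max a ∈ l := by
  induction l generalizing a with
  | nil => left; rfl
  | cons b t ih =>
    rcases ih (max a b) with h | h
    · rcases max_choice a b with h' | h'
      · left; rw [List.foldl_cons, h, h']
      · right; rw [List.foldl_cons, h, h']; exact List.mem_cons_self
    · right; exact List.mem_cons_of_mem _ h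

lemma rot_le_maxRot (s : List Bool) {i : ℕ} (hi : i < s.length) : rot s i ≤ maxRot s := by
  rw [maxRot_eq_foldl]
  exact mem_le_foldl_max _ _ _ (List.mem_map_of_mem (List.mem_range.mpr hi))

lemma isRot_maxRot (s : List Bool) : IsRot s (maxRot s) := by
  rw [maxRot_eq_foldl]
  rcases foldl_max_choice ((List.range s.length).map (rot s)) s with h | h
  · rw [h]; exact ⟨s, [], by simp, by simp⟩
  · obtain ⟨i, _, hi⟩ := List.mem_map.mp h
    rw [← hi]; exact isRot_rot s i

lemma isRot_le_maxRot {s r : List Bool} (h : IsRot s r) : r ≤ maxRot s := by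
  obtain ⟨x, y, rfl, rfl⟩ := h
  rcases eq_or_ne y [] with rfl | hy
  · simp only [List.nil_append, List.append_nil]
    rw [maxRot_eq_foldl]
    exact le_foldl_max _ _
  · have hx : y ++ x = rot (x ++ y) x.length := by
      simp [rot, List.drop_left, List.take_left]
    rw [hx]
    apply rot_le_maxRot
    have := List.length_pos_iff.mpr hy
    simp only [List.length_append]; omega

lemma maxRot_length (s : List Bool) : (maxRot s).length = s.length :=
  isRot_length (isRot_maxRot s)

/-- A cons with a bigger head is lexicographically bigger. -/
lemma cons_lt_cons_head {a b : Bool} (h : a < b) (l l' : List Bool) : a :: l < b :: l' :=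
  List.Lex.rel h

lemma cons_le_cons_tail {a : Bool} {l l' : List Bool} (h : a :: l ≤ a :: l') : l ≤ l' := by
  rcases lt_or_eq_of_le h with h | h
  · have h' : List.Lex (· < ·) (a :: l) (a :: l') := h
    cases h' with
    | rel hr => exact absurd hr (lt_irrefl a)
    | cons ht => exact le_of_lt ht
  · injection h with h1 h2; exact le_of_eq h2

lemma not_true_lt_false (l l' : List Bool) (h : true :: l < false :: l') : False := by
  have h' : List.Lex (· < ·) (true :: l) (false :: l') := h
  cases h' with
  | rel hr => exact absurd hr (by decide)

/-- A Lyndon word of length ≥ 2 is not constant. -/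
lemma isLyndon_not_constant {S : List Bool} (hm : 2 ≤ S.length) (hL : IsLyndon S)
    (c : Bool) (hc : ∀ b ∈ S, b = c) : False := by
  have h1 := hL 1 one_pos (by omega)
  have h2 : S.take (S.length - 1) = List.replicate (S.length - 1) c := by
    rw [List.eq_replicate_iff]
    constructor
    · rw [List.length_take]; omega
    · exact fun b hb => hc b (List.mem_of_mem_take hb)
  have h3 : S.drop 1 = List.replicate (S.length - 1) c := by
    rw [List.eq_replicate_iff]
    constructor
    · rw [List.length_drop]
    · exact fun b hb => hc b (List.mem_of_mem_drop hb)
  rw [h2, h3] at h1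
  exact absurd h1 (lt_irrefl _)

lemma exists_true_mem {S : List Bool} (hm : 2 ≤ S.length) (hL : IsLyndon S) :
    true ∈ S := by
  by_contra h
  refine isLyndon_not_constant hm hL false (fun b hb => ?_)
  cases b with
  | false => rfl
  | true => exact absurd hb h

lemma exists_false_mem {S : List Bool} (hm : 2 ≤ S.length) (hL : IsLyndon S) :
    false ∈ S := by
  by_contra h
  refine isLyndon_not_constant hm hL true (fun b hb => ?_)
  cases b with
  | false => exact absurd hb h
  | true => rfl

/-- The first letter of the maximal rotation is `true`. -/
lemma maxRot_head {S : List Bool} (hm : 2 ≤ S.length) (hL : IsLyndon S) :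
    (maxRot S).getD 0 false = true := by
  obtain ⟨j, hj, hjt⟩ := List.mem_iff_getElem.mp (exists_true_mem hm hL)
  have hrot : rot S j = true :: (S.drop (j + 1) ++ S.take j) := by
    rw [rot, List.drop_eq_getElem_cons hj, hjt]; rfl
  have hle : rot S j ≤ maxRot S := rot_le_maxRot S hj
  have hlen : 0 < (maxRot S).length := by rw [maxRot_length]; omega
  obtain ⟨a, t, hat⟩ := List.exists_cons_of_ne_nil (List.length_pos_iff.mp hlen)
  rw [hat]
  cases a with
  | true => rfl
  | false =>
    exfalso
    rw [hat, hrot] at hle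
    exact absurd (lt_of_lt_of_le
      (cons_lt_cons_head (show (false:Bool) < true by decide) t (S.drop (j + 1) ++ S.take j))
      hle) (lt_irrefl _)

/-- Key induction: if `true :: u ≤ u ++ [true]` then `u` is all `true`. -/
lemma all_true_of_le (u : List Bool) (h : true :: u ≤ u ++ [true]) :
    ∀ b ∈ u, b = true := by
  induction u with
  | nil => simp
  | cons b v ih =>
    cases b with
    | false =>
      exfalso
      have h' : true :: (false :: v) ≤ false :: (v ++ [true]) := h
      exact absurd (lt_of_lt_of_le
        (cons_lt_cons_head (show (false:Bool) < true by decide) (v ++ [true]) (false :: v))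
        h') (lt_irrefl _)
    | true =>
      have h' : true :: v ≤ v ++ [true] := cons_le_cons_tail h
      intro c hc
      rcases List.mem_cons.mp hc with rfl | hcv
      · rfl
      · exact ih h' c hcv

/-- The last letter of the maximal rotation is `false`. -/
lemma maxRot_last {S : List Bool} (hm : 2 ≤ S.length) (hL : IsLyndon S) :
    (maxRot S).getD (S.length - 1) false = false := by
  set L := maxRot S with hLdef
  have hlen : L.length = S.length := maxRot_length S
  have hne : L ≠ [] := by intro h; rw [h] at hlen; simp at hlen; omega
  have hidx : S.length - 1 < L.length := by omega
  rw [List.getD_eq_getElem _ _ hidx]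
  by_contra hcon
  have hlast : L.getLast hne = true := by
    rw [List.getLast_eq_getElem]
    simpa [hlen] using Bool.of_not_eq_false hcon
  have hsplit : L = L.dropLast ++ [true] := by
    conv_lhs => rw [← List.dropLast_append_getLast hne, hlast]
  have h1 : IsRot S (true :: L.dropLast) :=
    isRot_trans (isRot_maxRot S) ⟨L.dropLast, [true], hsplit, rfl⟩
  have h2 : true :: L.dropLast ≤ L := isRot_le_maxRot h1
  have h2' : true :: L.dropLast ≤ L.dropLast ++ [true] := h2.trans_eq hsplit
  have h3 := all_true_of_le L.dropLast h2'
  have hallL : ∀ b ∈ L, b = true := by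
    intro b hb
    rw [hsplit] at hb
    rcases List.mem_append.mp hb with hb | hb
    · exact h3 b hb
    · simpa using hb
  exact isLyndon_not_constant hm hL true
    (fun b hb => hallL b ((isRot_mem_iff (isRot_maxRot S) b).mpr hb))

/-- A Lyndon word of length ≥ 2 starts with `false`. -/
lemma lyndon_head {S : List Bool} (hm : 2 ≤ S.length) (hL : IsLyndon S) :
    S.getD 0 false = false := by
  have h0 : 0 < S.length := by omega
  rw [List.getD_eq_getElem _ _ h0]
  by_contra hcon
  have hS0 : S[0] = true := Bool.of_not_eq_false hcon
  obtain ⟨j, hj, hjf⟩ := List.mem_iff_getElem.mp (exists_false_mem hm hL)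
  have hj0 : j ≠ 0 := by intro h; subst h; simp [hS0] at hjf
  have h1 := hL j (by omega) hj
  have hdrop : S.drop j = false :: S.drop (j + 1) := by
    rw [List.drop_eq_getElem_cons hj, hjf]
  have htake : S.take (S.length - j) = true :: (S.drop 1).take (S.length - j - 1) := by
    have hScons : S = true :: S.drop 1 := by
      conv_lhs => rw [← (List.drop_zero : S.drop 0 = S), List.drop_eq_getElem_cons h0, hS0]
    obtain ⟨k, hk⟩ : ∃ k, S.length - j = k + 1 := ⟨S.length - j - 1, by omega⟩
    rw [hk]
    simp only [Nat.add_sub_cancel]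
    conv_lhs => rw [hScons]
    rw [List.take_succ_cons]
  rw [hdrop, htake] at h1
  exact not_true_lt_false _ _ h1

/-! ### Auxiliary analytic lemmas -/

lemma digit_nonneg (b : Bool) : (0:ℝ) ≤ cond b 1 0 := by cases b <;> norm_num

lemma digit_le_one (b : Bool) : (cond b 1 0 : ℝ) ≤ 1 := by cases b <;> norm_num

lemma summable_val {β : ℝ} (hβ : 1 < β) (x : ℕ → Bool) :
    Summable (fun n => (cond (x n) 1 0 : ℝ) / β ^ (n + 1)) := by
  have hβ0 : (0:ℝ) < β := lt_trans one_pos hβ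
  refine Summable.of_nonneg_of_le
    (fun n => div_nonneg (digit_nonneg _) (pow_nonneg hβ0.le _)) (fun n => ?_)
    (summable_geometric_of_lt_one (by positivity) (inv_lt_one_of_one_lt₀ hβ))
  calc (cond (x n) 1 0 : ℝ) / β ^ (n + 1) ≤ 1 / β ^ (n + 1) := by
        exact div_le_div_of_nonneg_right (digit_le_one _) (pow_nonneg hβ0.le _)
    _ ≤ 1 / β ^ n :=
        one_div_le_one_div_of_le (pow_pos hβ0 n) (pow_le_pow_right₀ hβ.le (by omega))
    _ = (β⁻¹) ^ n := by rw [inv_pow, one_div]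

lemma val_nonneg {β : ℝ} (hβ : 1 < β) (x : ℕ → Bool) : 0 ≤ val β x :=
  tsum_nonneg (fun n => div_nonneg (digit_nonneg _)
    (pow_nonneg (by linarith : (0:ℝ) ≤ β) _))

lemma val_app {β : ℝ} (hβ : 1 < β) (w : List Bool) (x : ℕ → Bool) :
    val β (app w x) =
      (∑ i ∈ Finset.range w.length, (cond (w.getD i false) 1 0 : ℝ) / β ^ (i + 1))
        + (β ^ w.length)⁻¹ * val β x := by
  have hβ0 : (0:ℝ) < β := lt_trans one_pos hβ
  have hsum := summable_val hβ (app w x)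
  rw [val, ← Summable.sum_add_tsum_nat_add w.length hsum]
  congr 1
  · apply Finset.sum_congr rfl
    intro i hi
    rw [Finset.mem_range] at hi
    have : app w x i = w.getD i false := by
      rw [app, List.getD_eq_getElem _ _ hi, List.getD_eq_getElem _ _ hi]
    rw [this]
  · rw [val, ← tsum_mul_left]
    apply tsum_congr
    intro i
    have h1 : app w x (i + w.length) = x i := by
      rw [app, List.getD_eq_default _ _ (by omega : w.length ≤ i + w.length)]
      congr 1
      omega
    have h2 : β ^ (i + w.length + 1) = β ^ w.length * β ^ (i + 1) := by
      rw [← pow_add]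
      congr 1
      omega
    rw [h1, h2]
    field_simp

lemma perSeq_app (w : List Bool) (hw : w ≠ []) : perSeq w = app w (perSeq w) := by
  have hm : 0 < w.length := List.length_pos_iff.mpr hw
  funext n
  by_cases h : n < w.length
  · rw [perSeq, app, Nat.mod_eq_of_lt h, List.getD_eq_getElem _ _ h,
      List.getD_eq_getElem _ _ h]
  · push_neg at h
    rw [perSeq, app, List.getD_eq_default _ _ h]
    show w.getD (n % w.length) false = w.getD ((n - w.length) % w.length) false
    rw [Nat.mod_eq_sub_mod h]

lemma val_perSeq {β : ℝ} (hβ : 1 < β) (w : List Bool) (hw : w ≠ []) :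
    val β (perSeq w) =
      (∑ i ∈ Finset.range w.length, (cond (w.getD i false) 1 0 : ℝ) / β ^ (i + 1))
        + (β ^ w.length)⁻¹ * val β (perSeq w) := by
  conv_lhs => rw [perSeq_app w hw]
  exact val_app hβ w (perSeq w)

/-- The key termwise inequality. -/
lemma termwise {p q : ℝ} (hp : 1 < p) (hpq : p < q) (n : ℕ) (b : Bool) :
    (q - p) / q * ((cond b 1 0 : ℝ) / q ^ (n + 1)) ≤
      (cond b 1 0 : ℝ) / p ^ (n + 1) - (cond b 1 0 : ℝ) / q ^ (n + 1) := by
  cases b with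
  | false => simp
  | true =>
    simp only [cond]
    have hp0 : (0:ℝ) < p := by linarith
    have hq0 : (0:ℝ) < q := by linarith
    have hpn : p ^ n ≤ q ^ n := pow_le_pow_left₀ (le_of_lt hp0) (le_of_lt hpq) n
    have hP : (0:ℝ) < p ^ n := pow_pos hp0 n
    have hQ : (0:ℝ) < q ^ n := pow_pos hq0 n
    have hP1 : (0:ℝ) < p ^ (n + 1) := pow_pos hp0 _
    have hQ1 : (0:ℝ) < q ^ (n + 1) := pow_pos hq0 _
    have key : (q - p) * p ^ (n + 1) ≤ q * (q ^ (n + 1) - p ^ (n + 1)) := by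
      rw [pow_succ, pow_succ]
      nlinarith [mul_nonneg hP.le (sq_nonneg (q - p)),
        mul_le_mul_of_nonneg_left hpn (sq_nonneg q)]
    rw [div_mul_div_comm, div_sub_div _ _ (ne_of_gt hP1) (ne_of_gt hQ1),
      div_le_div_iff₀ (by positivity) (by positivity)]
    nlinarith [mul_le_mul_of_nonneg_right key hQ1.le]

/-- The final arithmetic computation. -/
lemma final_algebra {p q A T VL VS u : ℝ} (hp : 1 < p) (hpq : p < q)
    (hu0 : 0 < u) (hu1 : u < 1) (hA0 : 0 ≤ A) (hT0 : 0 ≤ T)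
    (h2 : A = VL + u * A) (h3 : T = VS + u * T)
    (h4 : 1 = (VL + u) + u * T)
    (h5 : 1/q ≤ VL) (h6 : (q - 1) * VS ≤ 1/q - u)
    (h1 : (q - p) * A ≤ q * (1 - A)) :
    (q - p) * (q - 1) ≤ q * u := by
  have hq1 : (1:ℝ) < q := hp.trans hpq
  have hq0 : (0:ℝ) < q := by linarith
  have h1u : (0:ℝ) < 1 - u := by linarith
  have hq00 : (0:ℝ) < 1/q := by positivity
  have hApos : 0 < A := by nlinarith [mul_nonneg hu0.le hA0]
  have h1mA : 1 - A = u * (1 + T - A) := by linear_combination h4 - h2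
  have hTT : (1 + T - A) * (1 - u) = T := by linear_combination h1mA
  have hVS : VS = T * (1 - u) := by linear_combination -h3
  have hVL : VL = A * (1 - u) := by linear_combination -h2
  have hqT : (q - 1) * T ≤ (1 - u) * A := by
    have h1q : 1/q ≤ 1 := by rw [div_le_one hq0]; linarith
    have e1 : (q - 1) * T * (1 - u) = (q - 1) * VS := by rw [hVS]; ring
    have e2 : 1/q - u ≤ (1 - u) * (1/q) := by nlinarith [mul_nonneg hu0.le (by linarith : (0:ℝ) ≤ 1 - 1/q)]
    have e3 : (1 - u) * (1/q) ≤ (1 - u) * VL := mul_le_mul_of_nonneg_left h5 h1u.le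
    have e5 : (q - 1) * T * (1 - u) ≤ ((1 - u) * A) * (1 - u) := by
      rw [e1]
      calc (q - 1) * VS ≤ 1/q - u := h6
        _ ≤ (1 - u) * (1/q) := e2
        _ ≤ (1 - u) * VL := e3
        _ = ((1 - u) * A) * (1 - u) := by rw [hVL]; ring
    exact le_of_mul_le_mul_right e5 h1u
  have step1 : (q - p) * A * ((q - 1) * (1 - u)) ≤ q * (1 - A) * ((q - 1) * (1 - u)) :=
    mul_le_mul_of_nonneg_right h1 (mul_nonneg (by linarith) h1u.le)
  have step2 : q * (1 - A) * ((q - 1) * (1 - u)) = q * u * ((q - 1) * T) := by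
    linear_combination (q * (q - 1) * (1 - u)) * h1mA + (q * (q - 1) * u) * hTT
  have step3 : q * u * ((q - 1) * T) ≤ q * u * ((1 - u) * A) :=
    mul_le_mul_of_nonneg_left hqT (by positivity)
  have step4 : ((q - p) * (q - 1)) * ((1 - u) * A) ≤ (q * u) * ((1 - u) * A) :=
    calc ((q - p) * (q - 1)) * ((1 - u) * A) = (q - p) * A * ((q - 1) * (1 - u)) := by ring
      _ ≤ q * (1 - A) * ((q - 1) * (1 - u)) := step1
      _ = q * u * ((q - 1) * T) := step2
      _ ≤ q * u * ((1 - u) * A) := step3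
      _ = (q * u) * ((1 - u) * A) := by ring
  exact le_of_mul_le_mul_right step4 (mul_pos h1u hApos)

/-- Length bound for a Lyndon interval `J = [p,q]` generated by a Lyndon word `S` of
length `m ≥ 2`: if `(L(S)^∞)_p = 1` and `(L(S)⁺ S^∞)_q = 1` with `1 < p < q ≤ 2`,
then `q − p ≤ (q/(q−1)) q^{−m}`. -/
theorem stmt17 (S : List Bool) (hm : 2 ≤ S.length) (hL : IsLyndon S)
    (p q : ℝ) (hp : 1 < p) (hpq : p < q) (hq : q ≤ 2)
    (hvp : val p (perSeq (maxRot S)) = 1)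
    (hvq : val q (app ((maxRot S).dropLast ++ [true]) (perSeq S)) = 1) :
    q - p ≤ q / (q - 1) * q ^ (-(S.length : ℤ)) := by
  have hq1 : (1:ℝ) < q := hp.trans hpq
  have hq0 : (0:ℝ) < q := by linarith
  have hLlen : (maxRot S).length = S.length := maxRot_length S
  have hSne : S ≠ [] := by intro h; rw [h] at hm; simp at hm
  have hLne : maxRot S ≠ [] := by
    intro h; rw [h] at hLlen; simp at hLlen; omega
  have hL0 : (maxRot S).getD 0 false = true := maxRot_head hm hL
  have hLm : (maxRot S).getD (S.length - 1) false = false := maxRot_last hm hL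
  have hS0 : S.getD 0 false = false := lyndon_head hm hL
  -- basic value identities
  have h2 := val_perSeq hq1 (maxRot S) hLne
  rw [hLlen] at h2
  have h3 := val_perSeq hq1 S hSne
  have hWlen : ((maxRot S).dropLast ++ [true]).length = S.length := by
    simp only [List.length_append, List.length_dropLast, List.length_cons,
      List.length_nil, hLlen]
    omega
  have h4' := val_app hq1 ((maxRot S).dropLast ++ [true]) (perSeq S)
  rw [hvq, hWlen] at h4'
  have hsumW : ∑ i ∈ Finset.range S.length,
      (cond (((maxRot S).dropLast ++ [true]).getD i false) 1 0 : ℝ) / q ^ (i + 1)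
      = (∑ i ∈ Finset.range S.length,
          (cond ((maxRot S).getD i false) 1 0 : ℝ) / q ^ (i + 1))
        + (q ^ S.length)⁻¹ := by
    obtain ⟨k, hk⟩ : ∃ k, S.length = k + 1 := ⟨S.length - 1, by omega⟩
    rw [hk, Finset.sum_range_succ, Finset.sum_range_succ]
    have e1 : ∀ i ∈ Finset.range k,
        (cond (((maxRot S).dropLast ++ [true]).getD i false) 1 0 : ℝ) / q ^ (i + 1)
        = (cond ((maxRot S).getD i false) 1 0 : ℝ) / q ^ (i + 1) := by
      intro i hi
      rw [Finset.mem_range] at hi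
      have hidl : i < (maxRot S).dropLast.length := by
        rw [List.length_dropLast, hLlen]; omega
      have hiW : i < ((maxRot S).dropLast ++ [true]).length := by rw [hWlen]; omega
      have hiL : i < (maxRot S).length := by rw [hLlen]; omega
      rw [List.getD_eq_getElem _ _ hiW, List.getD_eq_getElem _ _ hiL,
        List.getElem_append_left hidl, List.getElem_dropLast]
    rw [Finset.sum_congr rfl e1]
    have e2 : (((maxRot S).dropLast ++ [true])).getD k false = true := by
      have hklt : k < ((maxRot S).dropLast ++ [true]).length := by rw [hWlen]; omega
      have hdll : (maxRot S).dropLast.length ≤ k := by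
        rw [List.length_dropLast, hLlen]; omega
      rw [List.getD_eq_getElem _ _ hklt, List.getElem_append_right hdll]
      simp
    have e3 : (maxRot S).getD k false = false := by
      have hk1 : S.length - 1 = k := by omega
      rw [← hk1]; exact hLm
    rw [e2, e3]
    simp [one_div]
  rw [hsumW] at h4'
  -- lower bound for V_L
  have h5 : 1/q ≤ ∑ i ∈ Finset.range S.length,
      (cond ((maxRot S).getD i false) 1 0 : ℝ) / q ^ (i + 1) := by
    have h0m : 0 ∈ Finset.range S.length := Finset.mem_range.mpr (by omega)
    have hsl := Finset.single_le_sum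
      (f := fun i => (cond ((maxRot S).getD i false) 1 0 : ℝ) / q ^ (i + 1))
      (fun i _ => div_nonneg (digit_nonneg _) (pow_nonneg hq0.le _)) h0m
    have h00 : (cond ((maxRot S).getD 0 false) 1 0 : ℝ) / q ^ (0 + 1) = 1/q := by
      rw [hL0]; norm_num
    rw [← h00]
    exact hsl
  -- upper bound for V_S
  have h6 : (q - 1) * (∑ i ∈ Finset.range S.length,
      (cond (S.getD i false) 1 0 : ℝ) / q ^ (i + 1)) ≤ 1/q - (q ^ S.length)⁻¹ := by
    obtain ⟨k, hk⟩ : ∃ k, S.length = k + 1 := ⟨S.length - 1, by omega⟩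
    have hVS_le : (∑ i ∈ Finset.range S.length,
        (cond (S.getD i false) 1 0 : ℝ) / q ^ (i + 1))
        ≤ ∑ i ∈ Finset.range k, 1 / q ^ (i + 1 + 1) := by
      rw [hk, Finset.sum_range_succ']
      have hf0 : (cond (S.getD 0 false) 1 0 : ℝ) / q ^ (0 + 1) = 0 := by
        rw [hS0]; simp
      rw [hf0, add_zero]
      apply Finset.sum_le_sum
      intro i _
      exact div_le_div_of_nonneg_right (digit_le_one _) (pow_nonneg hq0.le _)
    have htel : (q - 1) * ∑ i ∈ Finset.range k, 1 / q ^ (i + 1 + 1)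
        = 1/q - 1/q ^ (k + 1) := by
      rw [Finset.mul_sum]
      have hterm : ∀ i ∈ Finset.range k,
          (q - 1) * (1 / q ^ (i + 1 + 1)) = 1 / q ^ (i + 1) - 1 / q ^ (i + 1 + 1) := by
        intro i _
        have hqn : (0:ℝ) < q ^ (i + 1) := pow_pos hq0 _
        field_simp
        ring
      rw [Finset.sum_congr rfl hterm]
      have := Finset.sum_range_sub' (fun i => 1 / q ^ (i + 1)) k
      simpa using this
    calc (q - 1) * (∑ i ∈ Finset.range S.length,
          (cond (S.getD i false) 1 0 : ℝ) / q ^ (i + 1))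
        ≤ (q - 1) * ∑ i ∈ Finset.range k, 1 / q ^ (i + 1 + 1) := by
          apply mul_le_mul_of_nonneg_left hVS_le (by linarith)
      _ = 1/q - 1/q ^ (k + 1) := htel
      _ = 1/q - (q ^ S.length)⁻¹ := by rw [hk]; simp [one_div]

  -- the comparison inequality at p and q
  have hfp := summable_val hp (perSeq (maxRot S))
  have hfq := summable_val hq1 (perSeq (maxRot S))
  have hdiff : ∑' n, ((cond (perSeq (maxRot S) n) 1 0 : ℝ) / p ^ (n + 1)
      - (cond (perSeq (maxRot S) n) 1 0 : ℝ) / q ^ (n + 1))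
      = 1 - val q (perSeq (maxRot S)) := by
    rw [(hfp.hasSum.sub hfq.hasSum).tsum_eq]
    have hp' : (∑' n, (cond (perSeq (maxRot S) n) 1 0 : ℝ) / p ^ (n + 1)) = 1 := hvp
    rw [hp']
    rfl
  have hstep : ∑' n, ((q - p)/q * ((cond (perSeq (maxRot S) n) 1 0 : ℝ) / q ^ (n + 1)))
      ≤ ∑' n, ((cond (perSeq (maxRot S) n) 1 0 : ℝ) / p ^ (n + 1)
      - (cond (perSeq (maxRot S) n) 1 0 : ℝ) / q ^ (n + 1)) := by
    apply (hfq.mul_left _).tsum_le_tsum (fun n => termwise hp hpq n _)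
      ((hfp.hasSum.sub hfq.hasSum).summable)
  rw [tsum_mul_left, hdiff] at hstep
  have h1 : (q - p) * val q (perSeq (maxRot S))
      ≤ q * (1 - val q (perSeq (maxRot S))) := by
    have hmul := mul_le_mul_of_nonneg_left hstep hq0.le
    calc (q - p) * val q (perSeq (maxRot S))
        = q * ((q - p)/q * val q (perSeq (maxRot S))) := by field_simp
      _ ≤ q * (1 - val q (perSeq (maxRot S))) := hmul
  -- finish
  have hu0 : (0:ℝ) < (q ^ S.length)⁻¹ := by positivity
  have hu1 : (q ^ S.length)⁻¹ < 1 :=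
    inv_lt_one_of_one_lt₀ (one_lt_pow₀ hq1 (by omega))
  have hzpow : (q:ℝ) ^ (-(S.length : ℤ)) = (q ^ S.length)⁻¹ := by
    rw [zpow_neg, zpow_natCast]
  rw [hzpow, div_mul_eq_mul_div, le_div_iff₀ (by linarith : (0:ℝ) < q - 1)]
  calc (q - p) * (q - 1)
      ≤ q * (q ^ S.length)⁻¹ :=
        final_algebra hp hpq hu0 hu1 (val_nonneg hq1 _) (val_nonneg hq1 _)
          h2 h3 h4' h5 h6 h1
    _ = q * (q ^ S.length)⁻¹ := rfl
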